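/- Let G be a finite simple graph and let e = v_i v_j be a non-pendent edge of G (both d_i ≥ 2 and d_j ≥ 2). Let d_min^(i), d_max^(i) denote the minimum and maximum degree among the neighbors of v_i other than v_j, and similarly d_min^(j), d_max^(j) for v_j. If either (i) max{ d_i/d_min^(i), d_j/d_min^(j) } ≤ 1, or (ii) max{ d_i/d_j, d_j/d_i } ≤ min{ (d_i − 1/2)/d_max^(i), (d_j − 1/2)/d_max^(j) }, then GA(G) > GA(G − e), where G − e is the graph obtained from G by deleting the edge e. -/

import Mathlib

open SimpleGraph

/-- The degree of a vertex, as a natural number (classical, to avoid decidability assumptions). -/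
noncomputable def ndeg {V : Type*} [Fintype V] (G : SimpleGraph V) (v : V) : ℕ :=
  letI := Classical.decRel G.Adj
  G.degree v

/-- The degree of a vertex, as a real number. -/
noncomputable def deg {V : Type*} [Fintype V] (G : SimpleGraph V) (v : V) : ℝ :=
  (ndeg G v : ℝ)

/-- For a symmetric function `f`, `edgeSum G f = Σ_{uv ∈ E(G)} f (d_u) (d_v)`:
each unordered edge is counted twice in the double sum, hence the factor `1/2`. -/
noncomputable def edgeSum {V : Type*} [Fintype V] (G : SimpleGraph V) (f : ℝ → ℝ → ℝ) : ℝ :=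
  letI := Classical.decRel G.Adj
  (1 / 2) * ∑ u : V, ∑ w : V, if G.Adj u w then f (deg G u) (deg G w) else 0

/-- The arithmetic-geometric index `AG(G) = Σ_{uv ∈ E(G)} (1/2)(√(d_u/d_v) + √(d_v/d_u))`. -/
noncomputable def AG {V : Type*} [Fintype V] (G : SimpleGraph V) : ℝ :=
  edgeSum G (fun x y => (Real.sqrt (x / y) + Real.sqrt (y / x)) / 2)

/-- The first geometric-arithmetic index `GA(G) = Σ_{uv ∈ E(G)} 2√(d_u d_v)/(d_u + d_v)`. -/
noncomputable def GA {V : Type*} [Fintype V] (G : SimpleGraph V) : ℝ :=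
  edgeSum G (fun x y => 2 * Real.sqrt (x * y) / (x + y))

/-- The forgotten index `F(G) = Σ_{uv ∈ E(G)} (d_u² + d_v²)`. -/
noncomputable def forgottenIndex {V : Type*} [Fintype V] (G : SimpleGraph V) : ℝ :=
  edgeSum G (fun x y => x ^ 2 + y ^ 2)

/-- The first Zagreb index `M₁(G) = Σ_{uv ∈ E(G)} (d_u + d_v)`. -/
noncomputable def M1 {V : Type*} [Fintype V] (G : SimpleGraph V) : ℝ :=
  edgeSum G (fun x y => x + y)

/-- The second Zagreb index `M₂(G) = Σ_{uv ∈ E(G)} d_u d_v`. -/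
noncomputable def M2 {V : Type*} [Fintype V] (G : SimpleGraph V) : ℝ :=
  edgeSum G (fun x y => x * y)

/-- The symmetric division deg index `SDD(G) = Σ_{uv ∈ E(G)} (d_u/d_v + d_v/d_u)`. -/
noncomputable def SDD {V : Type*} [Fintype V] (G : SimpleGraph V) : ℝ :=
  edgeSum G (fun x y => x / y + y / x)

/-- The atom-bond connectivity index `ABC(G) = Σ_{uv ∈ E(G)} √((d_u + d_v − 2)/(d_u d_v))`. -/
noncomputable def ABC {V : Type*} [Fintype V] (G : SimpleGraph V) : ℝ :=
  edgeSum G (fun x y => Real.sqrt ((x + y - 2) / (x * y)))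

/-- `G` is `(s,r)`-semiregular: its vertex set is the disjoint union of two nonempty sets,
all vertices of the first having degree `s` and all vertices of the second degree `r`. -/
def IsSemiregular {V : Type*} [Fintype V] (G : SimpleGraph V) (s r : ℕ) : Prop :=
  ∃ V₁ V₂ : Set V, V₁.Nonempty ∧ V₂.Nonempty ∧ Disjoint V₁ V₂ ∧ V₁ ∪ V₂ = Set.univ ∧
    (∀ v ∈ V₁, ndeg G v = s) ∧ (∀ v ∈ V₂, ndeg G v = r)

/-!
Write `f = gaWeight` for the edge weight of `GA`. Deleting `e = vᵢvⱼ` lowers the degrees of `vᵢ`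
and `vⱼ` by one and no other degree, so
`GA(G) - GA(G - e) = f(dᵢ, dⱼ) + Σ_{u ∈ N(vᵢ) ∖ vⱼ} (f(dᵢ, d_u) - f(dᵢ - 1, d_u)) + (the same at vⱼ)`.
Since `x ↦ f(x, c)` increases on `[0, c]`, in case (i) every summand is nonnegative. In case (ii)
`f(dᵢ, dⱼ) = f(1, M)` with `M = max(dᵢ/dⱼ, dⱼ/dᵢ)`, and each of the `dᵢ - 1` summands at `vᵢ` exceeds
`-f(dᵢ - 1/2, d_u) / (2(dᵢ - 1)) ≥ -f(1, M) / (2(dᵢ - 1))`, so each endpoint loses less than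
`f(1, M) / 2`.
-/

open Finset

noncomputable def gaWeight (x y : ℝ) : ℝ := 2 * Real.sqrt (x * y) / (x + y)

lemma GA_eq_edgeSum_gaWeight {V : Type*} [Fintype V] (G : SimpleGraph V) :
    GA G = edgeSum G gaWeight :=
  rfl

section gaWeight

variable {a c k x y z M : ℝ}

lemma gaWeight_comm (x y : ℝ) : gaWeight x y = gaWeight y x := by
  rw [gaWeight, gaWeight, mul_comm x, add_comm x]

lemma gaWeight_pos (hx : 0 < x) (hy : 0 < y) : 0 < gaWeight x y := by
  unfold gaWeight
  positivity

lemma gaWeight_mul_mul (hk : 0 < k) (x y : ℝ) : gaWeight (k * x) (k * y) = gaWeight x y := by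
  unfold gaWeight
  rw [show k * x * (k * y) = k ^ 2 * (x * y) by ring, Real.sqrt_mul (by positivity),
    Real.sqrt_sq hk.le, ← mul_add, mul_left_comm, mul_div_mul_left _ _ hk.ne']

lemma gaWeight_eq_gaWeight_one_max (hx : 0 < x) (hy : 0 < y) :
    gaWeight x y = gaWeight 1 (max (x / y) (y / x)) := by
  have h_one : ∀ {x y : ℝ}, 0 < x → gaWeight x y = gaWeight 1 (y / x) := fun hx => by
    rw [← gaWeight_mul_mul hx 1, mul_one, mul_div_cancel₀ _ hx.ne']
  rcases max_choice (x / y) (y / x) with h | h <;> rw [h]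
  · rw [gaWeight_comm, h_one hy]
  · exact h_one hx

lemma one_le_max_div_div (hx : 0 < x) (hy : 0 < y) : 1 ≤ max (x / y) (y / x) := by
  rcases le_total x y with h | h
  · exact le_max_of_le_right ((one_le_div hx).2 h)
  · exact le_max_of_le_left ((one_le_div hy).2 h)

lemma gaWeight_sq {t u : ℝ} (ht : 0 ≤ t) (hu : 0 ≤ u) :
    gaWeight (t ^ 2) (u ^ 2) = 2 * t * u / (t ^ 2 + u ^ 2) := by
  rw [gaWeight, ← mul_pow, Real.sqrt_sq (mul_nonneg ht hu), mul_assoc]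

lemma exists_sq_eq (hx : 0 ≤ x) : ∃ t, 0 ≤ t ∧ t ^ 2 = x :=
  ⟨Real.sqrt x, Real.sqrt_nonneg x, Real.sq_sqrt hx⟩

lemma gaWeight_le_gaWeight_of_le_of_le (hx : 0 ≤ x) (hxy : x ≤ y) (hyz : y ≤ z) :
    gaWeight x z ≤ gaWeight y z := by
  obtain ⟨t, ht, rfl⟩ := exists_sq_eq hx
  obtain ⟨s, hs, rfl⟩ := exists_sq_eq (hx.trans hxy)
  obtain ⟨u, hu, rfl⟩ := exists_sq_eq (hx.trans (hxy.trans hyz))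
  have hts : t ≤ s := (pow_le_pow_iff_left₀ ht hs two_ne_zero).1 hxy
  have hsu : s ≤ u := (pow_le_pow_iff_left₀ hs hu two_ne_zero).1 hyz
  rw [gaWeight_sq ht hu, gaWeight_sq hs hu]
  rcases hu.eq_or_lt with rfl | hu
  · simp
  rw [div_le_div_iff₀ (by positivity) (by positivity)]
  -- `s u (t² + u²) - t u (s² + u²) = u (s - t) (u² - s t)`
  nlinarith [mul_nonneg (mul_nonneg hu.le (sub_nonneg.2 hts))
    (sub_nonneg.2 (mul_le_mul hsu (hts.trans hsu) ht hu.le))]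

lemma gaWeight_le_gaWeight_one_of_mul_le (hc : 0 < c) (hM : 1 ≤ M) (hcM : c * M ≤ z) :
    gaWeight z c ≤ gaWeight 1 M := by
  have hz : 0 < z := lt_of_lt_of_le (by positivity) hcM
  have hzM : 0 < z / M := by positivity
  calc gaWeight z c = gaWeight c z := gaWeight_comm z c
    _ ≤ gaWeight (z / M) z := gaWeight_le_gaWeight_of_le_of_le hc.le
        ((le_div_iff₀ (by positivity)).2 hcM) (div_le_self hz.le hM)
    _ = gaWeight 1 M := by
      rw [← gaWeight_mul_mul hzM 1 M, mul_one, div_mul_cancel₀ _ (by positivity)]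

lemma two_mul_div_sub_two_mul_div_lt {t s q u : ℝ} (ht : 0 < t) (hs : 0 ≤ s) (hq : 0 ≤ q)
    (hu : 1 ≤ u) (hs2 : s ^ 2 = t ^ 2 + 1) (hq2 : q ^ 2 = t ^ 2 + 1 / 2) :
    2 * t * u / (t ^ 2 + u ^ 2) - 2 * s * u / (s ^ 2 + u ^ 2)
      < 2 * q * u / (q ^ 2 + u ^ 2) / (2 * t ^ 2) := by
  have hts : t < s := by nlinarith
  set P := (t ^ 2 + u ^ 2) * (s ^ 2 + u ^ 2) with hP
  have hP0 : 0 < P := by positivity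
  have hdiff : 2 * t * u / (t ^ 2 + u ^ 2) - 2 * s * u / (s ^ 2 + u ^ 2)
      = 2 * u * (s - t) * (s * t - u ^ 2) / P := by
    field_simp
    ring
  rw [hdiff]
  rcases le_or_gt (s * t) (u ^ 2) with hsmall | hbig
  · have : 2 * u * (s - t) * (s * t - u ^ 2) / P ≤ 0 :=
      div_nonpos_of_nonpos_of_nonneg
        (mul_nonpos_of_nonneg_of_nonpos (by nlinarith) (by linarith)) hP0.le
    have : 0 < q := by nlinarith
    have : 0 < 2 * q * u / (q ^ 2 + u ^ 2) / (2 * t ^ 2) := by positivity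
    linarith
  -- `s - t = 1 / (s + t) ≤ 1 / (2 t)`
  have h_gap : 2 * t * (s - t) ≤ 1 := by nlinarith
  -- AM-GM, strict because `s ≠ t`
  have h_amgm : s * t < q ^ 2 := by nlinarith [sq_pos_of_pos (sub_pos.2 hts)]
  have h_key : t * ((q ^ 2 - u ^ 2) * (q ^ 2 + u ^ 2)) ≤ q * P := by
    have hP' : P = (q ^ 2 + u ^ 2) ^ 2 - 1 / 4 := by rw [hP, hs2, hq2]; ring
    have h_qt : t ≤ q := by nlinarith
    have h_nonneg : 0 ≤ (q ^ 2 - u ^ 2) * (q ^ 2 + u ^ 2) := by nlinarith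
    have h_rest : 0 ≤ q * (2 * q ^ 2 * u ^ 2 + 2 * u ^ 4 - 1 / 4) :=
      mul_nonneg hq (by nlinarith)
    rw [hP']
    nlinarith [mul_le_mul_of_nonneg_right h_qt h_nonneg]
  calc 2 * u * (s - t) * (s * t - u ^ 2) / P
      ≤ u * (s * t - u ^ 2) / (t * P) := by
        rw [div_le_div_iff₀ hP0 (by positivity)]
        have : 0 ≤ P * (u * (s * t - u ^ 2)) :=
          mul_nonneg hP0.le (mul_nonneg (by linarith) (by linarith))
        nlinarith [mul_le_mul_of_nonneg_left h_gap this]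
    _ < u * (q ^ 2 - u ^ 2) / (t * P) := by gcongr
    _ ≤ 2 * q * u / (q ^ 2 + u ^ 2) / (2 * t ^ 2) := by
        rw [div_div, div_le_div_iff₀ (by positivity) (by positivity)]
        nlinarith [mul_le_mul_of_nonneg_left h_key (by positivity : 0 ≤ 2 * u * t)]

lemma gaWeight_pred_sub_gaWeight_lt (ha : 1 < a) (hc : 1 ≤ c) :
    gaWeight (a - 1) c - gaWeight a c < gaWeight (a - 1 / 2) c / (2 * (a - 1)) := by
  obtain ⟨t, ht, hta⟩ := exists_sq_eq (by linarith : 0 ≤ a - 1)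
  obtain ⟨s, hs, hsa⟩ := exists_sq_eq (by linarith : 0 ≤ a)
  obtain ⟨q, hq, hqa⟩ := exists_sq_eq (by linarith : 0 ≤ a - 1 / 2)
  obtain ⟨u, hu, rfl⟩ := exists_sq_eq (by linarith : 0 ≤ c)
  rw [← hqa, ← hta, ← hsa, gaWeight_sq ht hu, gaWeight_sq hs hu, gaWeight_sq hq hu]
  exact two_mul_div_sub_two_mul_div_lt (by nlinarith) hs hq (by nlinarith) (by linarith)
    (by linarith)

lemma neg_half_gaWeight_one_lt_sum {ι : Type*} {s : Finset ι} (hs : s.Nonempty) {d : ι → ℝ}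
    (hcard : (#s : ℝ) = a - 1) (hM : 1 ≤ M) (hd : ∀ i ∈ s, 1 ≤ d i)
    (hdM : ∀ i ∈ s, d i * M ≤ a - 1 / 2) :
    -(gaWeight 1 M / 2) < ∑ i ∈ s, (gaWeight a (d i) - gaWeight (a - 1) (d i)) := by
  have ha : 1 < a := by
    have : (0 : ℝ) < #s := by exact_mod_cast hs.card_pos
    linarith
  have hterm : ∀ i ∈ s,
      -(gaWeight 1 M / (2 * (a - 1))) < gaWeight a (d i) - gaWeight (a - 1) (d i) := by
    intro i hi
    have h_pred := gaWeight_pred_sub_gaWeight_lt ha (hd i hi)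
    have h_one : gaWeight (a - 1 / 2) (d i) / (2 * (a - 1)) ≤ gaWeight 1 M / (2 * (a - 1)) :=
      div_le_div_of_nonneg_right
        (gaWeight_le_gaWeight_one_of_mul_le (by linarith [hd i hi]) hM (hdM i hi))
        (by linarith)
    linarith
  calc -(gaWeight 1 M / 2) = ∑ i ∈ s, -(gaWeight 1 M / (2 * (a - 1))) := by
        have : a - 1 ≠ 0 := by linarith
        rw [sum_const, nsmul_eq_mul, hcard]
        field_simp
    _ < _ := sum_lt_sum_of_nonempty hs hterm

end gaWeight

lemma Finset.sum_sum_eq_of_eq_zero_off_pair {α β : Type*} [Fintype α] [DecidableEq α]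
    [AddCommMonoid β] {D : α → α → β} {v w : α} (hvw : v ≠ w) (hD : ∀ x y, D x y = D y x)
    (hv : D v v = 0) (hw : D w w = 0)
    (h0 : ∀ x ∉ ({v, w} : Finset α), ∀ y ∉ ({v, w} : Finset α), D x y = 0) :
    ∑ x, ∑ y, D x y = 2 • (D v w + ∑ y ∈ {v, w}ᶜ, D v y + ∑ y ∈ {v, w}ᶜ, D w y) := by
  have h_split : ∀ g : α → β, ∑ x, g x = g v + g w + ∑ x ∈ {v, w}ᶜ, g x := fun g => by
    rw [← sum_add_sum_compl {v, w}, sum_pair hvw]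
  have h_rest : ∀ x ∈ ({v, w} : Finset α)ᶜ, ∑ y, D x y = D v x + D w x := by
    intro x hx
    rw [h_split, sum_eq_zero fun y hy => h0 x (mem_compl.1 hx) y (mem_compl.1 hy), add_zero,
      hD x v, hD x w]
  rw [h_split, sum_congr rfl h_rest, sum_add_distrib, h_split (D v), h_split (D w), hv, hw,
    hD w v, two_nsmul]
  abel

section Graph

variable {V : Type*} {G : SimpleGraph V} {v w x y : V}

lemma deleteEdges_adj_iff_of_ne (hv : y ≠ v) (hw : y ≠ w) :
    (G.deleteEdges {s(v, w)}).Adj x y ↔ G.Adj x y := by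
  simp [hv, hw]

variable [Fintype V]

noncomputable def edgeWeight (G : SimpleGraph V) (f : ℝ → ℝ → ℝ) (x y : V) : ℝ :=
  letI := Classical.decRel G.Adj
  if G.Adj x y then f (deg G x) (deg G y) else 0

lemma edgeSum_eq_sum_edgeWeight (G : SimpleGraph V) (f : ℝ → ℝ → ℝ) :
    edgeSum G f = 1 / 2 * ∑ x, ∑ y, edgeWeight G f x y :=
  rfl

lemma edgeWeight_of_adj {f : ℝ → ℝ → ℝ} (h : G.Adj x y) :
    edgeWeight G f x y = f (deg G x) (deg G y) := by
  simp [edgeWeight, h]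

lemma edgeWeight_of_not_adj {f : ℝ → ℝ → ℝ} (h : ¬G.Adj x y) : edgeWeight G f x y = 0 := by
  simp [edgeWeight, h]

lemma edgeWeight_comm {f : ℝ → ℝ → ℝ} (hf : ∀ a b, f a b = f b a) (x y : V) :
    edgeWeight G f x y = edgeWeight G f y x := by
  by_cases h : G.Adj x y
  · rw [edgeWeight_of_adj h, edgeWeight_of_adj h.symm, hf]
  · rw [edgeWeight_of_not_adj h, edgeWeight_of_not_adj (mt G.adj_symm h)]

lemma ndeg_eq_degree [DecidableRel G.Adj] (v : V) : ndeg G v = G.degree v := by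
  unfold ndeg
  convert rfl

lemma one_le_deg_of_adj (h : G.Adj v w) : 1 ≤ deg G v := by
  classical
  unfold deg
  rw [ndeg_eq_degree, Nat.one_le_cast]
  exact (G.degree_pos_iff_exists_adj v).2 ⟨w, h⟩

lemma cast_card_neighborFinset_erase [DecidableEq V] [DecidableRel G.Adj] (h : G.Adj v w) :
    (#((G.neighborFinset v).erase w) : ℝ) = deg G v - 1 := by
  rw [card_erase_of_mem ((G.mem_neighborFinset v w).2 h), card_neighborFinset_eq_degree,
    deg, ndeg_eq_degree, Nat.cast_pred ((G.degree_pos_iff_exists_adj v).2 ⟨w, h⟩)]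

lemma deg_deleteEdges_of_ne (hv : x ≠ v) (hw : x ≠ w) :
    deg (G.deleteEdges {s(v, w)}) x = deg G x := by
  classical
  simp only [deg, ndeg_eq_degree, ← card_neighborFinset_eq_degree]
  congr 2
  ext y
  rw [mem_neighborFinset, mem_neighborFinset, adj_comm, G.adj_comm]
  exact deleteEdges_adj_iff_of_ne hv hw

lemma deg_deleteEdges_left (h : G.Adj v w) :
    deg (G.deleteEdges {s(v, w)}) v = deg G v - 1 := by
  classical
  rw [← cast_card_neighborFinset_erase h, deg, ndeg_eq_degree, ← card_neighborFinset_eq_degree]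
  congr 2
  ext y
  simp [h.ne, and_comm]

lemma sum_compl_pair_edgeWeight_sub_deleteEdges [DecidableEq V] [DecidableRel G.Adj]
    {f : ℝ → ℝ → ℝ} (h : G.Adj v w) :
    ∑ y ∈ {v, w}ᶜ, (edgeWeight G f v y - edgeWeight (G.deleteEdges {s(v, w)}) f v y) =
      ∑ u ∈ (G.neighborFinset v).erase w, (f (deg G v) (deg G u) - f (deg G v - 1) (deg G u)) := by
  have h_sub : (G.neighborFinset v).erase w ⊆ {v, w}ᶜ := by
    intro u hu
    obtain ⟨huw, hvu⟩ := mem_erase.1 hu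
    simpa [huw] using ((G.mem_neighborFinset v u).1 hvu).ne'
  rw [← sum_subset h_sub]
  · refine sum_congr rfl fun u hu => ?_
    obtain ⟨huw, hvu⟩ := mem_erase.1 hu
    have hvu := (G.mem_neighborFinset v u).1 hvu
    rw [edgeWeight_of_adj hvu, edgeWeight_of_adj ((deleteEdges_adj_iff_of_ne hvu.ne' huw).2 hvu),
      deg_deleteEdges_left h, deg_deleteEdges_of_ne hvu.ne' huw]
  · intro u hu hN
    obtain ⟨huv, huw⟩ : u ≠ v ∧ u ≠ w := by simpa using hu
    have hvu : ¬G.Adj v u := fun hvu => hN (mem_erase.2 ⟨huw, (G.mem_neighborFinset v u).2 hvu⟩)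
    rw [edgeWeight_of_not_adj hvu,
      edgeWeight_of_not_adj (mt (deleteEdges_adj_iff_of_ne huv huw).1 hvu), sub_zero]

theorem edgeSum_sub_edgeSum_deleteEdges [DecidableEq V] [DecidableRel G.Adj]
    {f : ℝ → ℝ → ℝ} (hf : ∀ a b, f a b = f b a) (h : G.Adj v w) :
    edgeSum G f - edgeSum (G.deleteEdges {s(v, w)}) f =
      f (deg G v) (deg G w)
        + ∑ u ∈ (G.neighborFinset v).erase w, (f (deg G v) (deg G u) - f (deg G v - 1) (deg G u))
        + ∑ u ∈ (G.neighborFinset w).erase v,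
            (f (deg G w) (deg G u) - f (deg G w - 1) (deg G u)) := by
  set H := G.deleteEdges {s(v, w)} with hH
  have h_off : ∀ x ∉ ({v, w} : Finset V), ∀ y ∉ ({v, w} : Finset V),
      edgeWeight G f x y - edgeWeight H f x y = 0 := by
    intro x hx y hy
    simp only [mem_insert, mem_singleton, not_or] at hx hy
    by_cases hxy : G.Adj x y
    · rw [edgeWeight_of_adj hxy, edgeWeight_of_adj ((deleteEdges_adj_iff_of_ne hy.1 hy.2).2 hxy),
        deg_deleteEdges_of_ne hx.1 hx.2, deg_deleteEdges_of_ne hy.1 hy.2, sub_self]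
    · rw [edgeWeight_of_not_adj hxy,
        edgeWeight_of_not_adj (mt (deleteEdges_adj_iff_of_ne hy.1 hy.2).1 hxy), sub_self]
  have h_loop : ∀ x, edgeWeight G f x x - edgeWeight H f x x = 0 := fun x => by
    rw [edgeWeight_of_not_adj (G.irrefl), edgeWeight_of_not_adj (H.irrefl), sub_self]
  have h_vw : edgeWeight G f v w - edgeWeight H f v w = f (deg G v) (deg G w) := by
    rw [edgeWeight_of_adj h, edgeWeight_of_not_adj (by simp [hH]), sub_zero]
  have h_row_w := sum_compl_pair_edgeWeight_sub_deleteEdges (f := f) h.symm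
  rw [Sym2.eq_swap, pair_comm] at h_row_w
  rw [edgeSum_eq_sum_edgeWeight, edgeSum_eq_sum_edgeWeight, ← mul_sub, ← sum_sub_distrib]
  simp_rw [← sum_sub_distrib]
  rw [Finset.sum_sum_eq_of_eq_zero_off_pair h.ne
      (fun x y => by rw [edgeWeight_comm hf x, edgeWeight_comm hf x]) (h_loop v) (h_loop w) h_off,
    h_vw, sum_compl_pair_edgeWeight_sub_deleteEdges h, h_row_w, two_nsmul]
  ring

end Graph

section Endpoint

variable {V : Type*} [Fintype V] [DecidableEq V] {G : SimpleGraph V} [DecidableRel G.Adj]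
  {v w : V}

lemma sum_gaWeight_sub_nonneg_of_isLeast {dmin : ℕ}
    (hmin : IsLeast {d : ℕ | ∃ u, G.Adj v u ∧ u ≠ w ∧ ndeg G u = d} dmin)
    (h : deg G v / dmin ≤ 1) :
    0 ≤ ∑ u ∈ (G.neighborFinset v).erase w,
      (gaWeight (deg G v) (deg G u) - gaWeight (deg G v - 1) (deg G u)) := by
  obtain ⟨u₀, hvu₀, -, rfl⟩ := hmin.1
  have hv : deg G v ≤ deg G u₀ :=
    (div_le_one (by linarith [one_le_deg_of_adj hvu₀.symm])).1 h
  refine sum_nonneg fun u hu => sub_nonneg.2 ?_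
  obtain ⟨huw, hvu⟩ := mem_erase.1 hu
  have hvu := (G.mem_neighborFinset v u).1 hvu
  have hu₀u : deg G u₀ ≤ deg G u := by
    unfold deg
    exact_mod_cast hmin.2 ⟨u, hvu, huw, rfl⟩
  exact gaWeight_le_gaWeight_of_le_of_le (by linarith [one_le_deg_of_adj hvu]) (by linarith)
    (hv.trans hu₀u)

lemma neg_half_gaWeight_one_lt_sum_of_isGreatest {dmax : ℕ} {M : ℝ} (h : G.Adj v w)
    (hmax : IsGreatest {d : ℕ | ∃ u, G.Adj v u ∧ u ≠ w ∧ ndeg G u = d} dmax) (hM : 1 ≤ M)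
    (hle : M ≤ (deg G v - 1 / 2) / dmax) :
    -(gaWeight 1 M / 2) < ∑ u ∈ (G.neighborFinset v).erase w,
      (gaWeight (deg G v) (deg G u) - gaWeight (deg G v - 1) (deg G u)) := by
  obtain ⟨u₀, hvu₀, hu₀w, rfl⟩ := hmax.1
  have hMu₀ : M * deg G u₀ ≤ deg G v - 1 / 2 :=
    (le_div_iff₀ (by linarith [one_le_deg_of_adj hvu₀.symm])).1 hle
  refine neg_half_gaWeight_one_lt_sum
    ⟨u₀, mem_erase.2 ⟨hu₀w, (G.mem_neighborFinset v u₀).2 hvu₀⟩⟩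
    (cast_card_neighborFinset_erase h) hM (fun u hu => ?_) (fun u hu => ?_)
  all_goals obtain ⟨huw, hvu⟩ := mem_erase.1 hu
  · exact one_le_deg_of_adj ((G.mem_neighborFinset v u).1 hvu).symm
  · have hu₀u : deg G u ≤ deg G u₀ := by
      unfold deg
      exact_mod_cast hmax.2 ⟨u, (G.mem_neighborFinset v u).1 hvu, huw, rfl⟩
    nlinarith

end Endpoint

theorem stmt18_general {V : Type*} [Fintype V] (G : SimpleGraph V) (vi vj : V)
    (he : G.Adj vi vj)
    (dmini dmaxi dminj dmaxj : ℕ)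
    (hdmini : IsLeast {d : ℕ | ∃ u, G.Adj vi u ∧ u ≠ vj ∧ ndeg G u = d} dmini)
    (hdmaxi : IsGreatest {d : ℕ | ∃ u, G.Adj vi u ∧ u ≠ vj ∧ ndeg G u = d} dmaxi)
    (hdminj : IsLeast {d : ℕ | ∃ u, G.Adj vj u ∧ u ≠ vi ∧ ndeg G u = d} dminj)
    (hdmaxj : IsGreatest {d : ℕ | ∃ u, G.Adj vj u ∧ u ≠ vi ∧ ndeg G u = d} dmaxj)
    (hcond :
      max ((ndeg G vi : ℝ) / (dmini : ℝ)) ((ndeg G vj : ℝ) / (dminj : ℝ)) ≤ 1 ∨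
      max ((ndeg G vi : ℝ) / (ndeg G vj : ℝ)) ((ndeg G vj : ℝ) / (ndeg G vi : ℝ)) ≤
        min (((ndeg G vi : ℝ) - 1 / 2) / (dmaxi : ℝ))
          (((ndeg G vj : ℝ) - 1 / 2) / (dmaxj : ℝ))) :
    GA (G.deleteEdges {s(vi, vj)}) < GA G := by
  classical
  have hi : 0 < deg G vi := by linarith [one_le_deg_of_adj he]
  have hj : 0 < deg G vj := by linarith [one_le_deg_of_adj he.symm]
  rw [← sub_pos, GA_eq_edgeSum_gaWeight, GA_eq_edgeSum_gaWeight,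
    edgeSum_sub_edgeSum_deleteEdges gaWeight_comm he]
  rcases hcond with hmin | hmax
  · have := sum_gaWeight_sub_nonneg_of_isLeast hdmini ((le_max_left _ _).trans hmin)
    have := sum_gaWeight_sub_nonneg_of_isLeast hdminj ((le_max_right _ _).trans hmin)
    linarith [gaWeight_pos hi hj]
  · have hM := one_le_max_div_div hi hj
    have := neg_half_gaWeight_one_lt_sum_of_isGreatest he hdmaxi hM
      (hmax.trans (min_le_left _ _))
    have := neg_half_gaWeight_one_lt_sum_of_isGreatest he.symm hdmaxj hM
      (hmax.trans (min_le_right _ _))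
    rw [gaWeight_eq_gaWeight_one_max hi hj]
    linarith

/-- Theorem 13 of the paper: sufficient conditions for `GA(G) > GA(G − e)` when `e = v_i v_j`
is a non-pendent edge. -/
theorem stmt18 {V : Type*} [Fintype V] (G : SimpleGraph V) (vi vj : V)
    (he : G.Adj vi vj) (hvi : 2 ≤ ndeg G vi) (hvj : 2 ≤ ndeg G vj)
    (dmini dmaxi dminj dmaxj : ℕ)
    (hdmini : IsLeast {d : ℕ | ∃ u, G.Adj vi u ∧ u ≠ vj ∧ ndeg G u = d} dmini)
    (hdmaxi : IsGreatest {d : ℕ | ∃ u, G.Adj vi u ∧ u ≠ vj ∧ ndeg G u = d} dmaxi)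
    (hdminj : IsLeast {d : ℕ | ∃ u, G.Adj vj u ∧ u ≠ vi ∧ ndeg G u = d} dminj)
    (hdmaxj : IsGreatest {d : ℕ | ∃ u, G.Adj vj u ∧ u ≠ vi ∧ ndeg G u = d} dmaxj)
    (hcond :
      max ((ndeg G vi : ℝ) / (dmini : ℝ)) ((ndeg G vj : ℝ) / (dminj : ℝ)) ≤ 1 ∨
      max ((ndeg G vi : ℝ) / (ndeg G vj : ℝ)) ((ndeg G vj : ℝ) / (ndeg G vi : ℝ)) ≤
        min (((ndeg G vi : ℝ) - 1 / 2) / (dmaxi : ℝ))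
          (((ndeg G vj : ℝ) - 1 / 2) / (dmaxj : ℝ))) :
    GA (G.deleteEdges {s(vi, vj)}) < GA G :=
  stmt18_general G vi vj he dmini dmaxi dminj dmaxj hdmini hdmaxi hdminj hdmaxj hcond
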